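/- If r is an irrational real number, then r and 1/r have common tails. -/

import Mathlib

/-- The sequence of complete quotients of the continued fraction expansion of `x`:
`cfTerm x 0 = x` and `cfTerm x (n+1) = 1 / (cfTerm x n - ⌊cfTerm x n⌋)`. -/
noncomputable def cfTerm (x : ℝ) : ℕ → ℝ
  | 0 => x
  | n + 1 => (cfTerm x n - ⌊cfTerm x n⌋)⁻¹

/-- The `n`-th partial quotient (digit) of the simple continued fraction expansion
`[x₀; x₁, x₂, …]` of `x`. -/
noncomputable def cfDigit (x : ℝ) (n : ℕ) : ℤ := ⌊cfTerm x n⌋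

/-- Two real numbers have *common tails* if their continued fraction expansions
eventually agree: there exist `m n` with `s_{m+k} = t_{n+k}` for all `k ≥ 0`. -/
def CommonTails (s t : ℝ) : Prop :=
  ∃ m n : ℕ, ∀ k : ℕ, cfDigit s (m + k) = cfDigit t (n + k)

lemma cfTerm_zero (x : ℝ) : cfTerm x 0 = x := rfl

lemma cfTerm_succ (x : ℝ) (n : ℕ) : cfTerm x (n+1) = (Int.fract (cfTerm x n))⁻¹ := by
  rw [cfTerm, Int.fract]

lemma cfTerm_shift (x : ℝ) (m : ℕ) : ∀ k, cfTerm x (m + k) = cfTerm (cfTerm x m) k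
  | 0 => rfl
  | k + 1 => by rw [← Nat.add_assoc, cfTerm_succ, cfTerm_succ, cfTerm_shift x m k]

lemma commonTails_of_eq {s t : ℝ} {m n : ℕ} (h : cfTerm s m = cfTerm t n) :
    CommonTails s t :=
  ⟨m, n, fun k => by unfold cfDigit; rw [cfTerm_shift, cfTerm_shift, h]⟩

lemma irr_fract {x : ℝ} (h : Irrational x) : Irrational (Int.fract x) := by
  rw [Int.fract]; exact h.sub_intCast _

lemma fract_pos_of_irr {x : ℝ} (h : Irrational x) : 0 < Int.fract x :=
  lt_of_le_of_ne (Int.fract_nonneg x) (Ne.symm (irr_fract h).ne_zero)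

/-- Key lemma: for irrational `g ∈ (0,1)`, `1/g` and `1/(1-g)` have a common
complete quotient (at positive indices). -/
lemma lemL (g : ℝ) (hg : Irrational g) (h0 : 0 < g) (h1 : g < 1) :
    ∃ i j : ℕ, 1 ≤ i ∧ 1 ≤ j ∧ cfTerm g⁻¹ i = cfTerm (1 - g)⁻¹ j := by
  set u := g⁻¹ with hu
  have hui : Irrational u := hg.inv
  have hu1 : 1 < u := (one_lt_inv_iff₀).mpr ⟨h0, h1⟩
  set h := Int.fract u with hh
  have hhi : Irrational h := irr_fract hui
  have hh0 : 0 < h := fract_pos_of_irr hui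
  have hh1 : h < 1 := Int.fract_lt_one u
  have hfl : (⌊u⌋ : ℝ) + h = u := Int.floor_add_fract u
  have hc1 : 1 ≤ ⌊u⌋ := Int.le_floor.mpr (by exact_mod_cast hu1.le)
  have hg1 : (1:ℝ) - g ≠ 0 := by linarith
  have hv : (1 - g)⁻¹ = 1 + (u - 1)⁻¹ := by
    have hgne : g ≠ 0 := ne_of_gt h0
    have hune : u - 1 ≠ 0 := by linarith
    rw [hu] at hune ⊢
    field_simp
    ring
  rcases eq_or_lt_of_le hc1 with hc | hc
  · -- ⌊u⌋ = 1 : u = 1 + h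
    have hue : u = 1 + h := by rw [← hfl, ← hc]; norm_num
    refine ⟨2, 1, by norm_num, by norm_num, ?_⟩
    have t1 : cfTerm u 1 = h⁻¹ := by rw [cfTerm_succ, cfTerm_zero]
    have t2 : cfTerm u 2 = (Int.fract h⁻¹)⁻¹ := by
      rw [show (2:ℕ) = 1+1 from rfl, cfTerm_succ, t1]
    have v1 : cfTerm (1 - g)⁻¹ 1 = (Int.fract h⁻¹)⁻¹ := by
      rw [cfTerm_succ, cfTerm_zero]
      have : Int.fract ((1 - g)⁻¹) = Int.fract h⁻¹ := by
        rw [hv, hue]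
        have : (1:ℝ) + h - 1 = h := by ring
        rw [this]
        exact_mod_cast Int.fract_intCast_add 1 h⁻¹
      rw [this]
    rw [t2, v1]
  · -- ⌊u⌋ ≥ 2 : u - 1 > 1
    have hc2 : (2:ℝ) ≤ (⌊u⌋:ℝ) := by exact_mod_cast hc
    have hu2 : 1 < u - 1 := by linarith
    refine ⟨1, 2, by norm_num, by norm_num, ?_⟩
    have t1 : cfTerm u 1 = h⁻¹ := by rw [cfTerm_succ, cfTerm_zero]
    have hiv : (0:ℝ) < (u - 1)⁻¹ := by positivity
    have hiv1 : (u - 1)⁻¹ < 1 := by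
      rw [inv_lt_one_iff₀]; right; exact hu2
    have v1 : cfTerm (1 - g)⁻¹ 1 = u - 1 := by
      rw [cfTerm_succ, cfTerm_zero]
      have : Int.fract ((1 - g)⁻¹) = (u - 1)⁻¹ := by
        rw [hv]
        rw [show (1:ℝ) + (u-1)⁻¹ = ((1:ℤ):ℝ) + (u-1)⁻¹ by norm_num,
          Int.fract_intCast_add, Int.fract_eq_self.mpr ⟨hiv.le, hiv1⟩]
      rw [this, inv_inv]
    have v2 : cfTerm (1 - g)⁻¹ 2 = h⁻¹ := by
      rw [show (2:ℕ) = 1+1 from rfl, cfTerm_succ, v1]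
      have : Int.fract (u - 1) = h := by
        rw [show (u:ℝ) - 1 = u - ((1:ℤ):ℝ) by norm_num, Int.fract_sub_intCast]
      rw [this]
    rw [t1, v2]

lemma negcase (r : ℝ) (hr : Irrational r) (hneg : r < -1) :
    ∃ m n : ℕ, cfTerm r m = cfTerm (1/r) n := by
  have hr0 : r < 0 := by linarith
  have hrne : r ≠ 0 := ne_of_lt hr0
  set f := Int.fract r with hf
  have hfi : Irrational f := irr_fract hr
  have hf0 : 0 < f := fract_pos_of_irr hr
  have hf1 : f < 1 := Int.fract_lt_one r
  have t1 : cfTerm r 1 = f⁻¹ := by rw [cfTerm_succ, cfTerm_zero]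
  have hs0 : 1/r < 0 := by
    rw [one_div]; exact inv_neg''.mpr hr0
  have hs1 : -1 < 1/r := by
    rw [lt_div_iff_of_neg hr0]; linarith
  have hfls : ⌊(1/r)⌋ = -1 := by
    rw [Int.floor_eq_iff]
    constructor
    · push_cast; linarith
    · push_cast; linarith
  have hfract_s : Int.fract (1/r) = 1/r + 1 := by
    rw [Int.fract, hfls]; push_cast; ring
  -- cfTerm (1/r) 1 = 1 + (-(r+1))⁻¹
  have hrp1 : r + 1 < 0 := by linarith
  have s1 : cfTerm (1/r) 1 = 1 + (-(r+1))⁻¹ := by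
    have hne : (1:ℝ) + r ≠ 0 := by intro h; exact hrp1.ne (by linarith)
    have hne2 : (-1:ℝ) - r ≠ 0 := by intro h; exact hrp1.ne' (by linarith)
    rw [cfTerm_succ, cfTerm_zero, hfract_s]
    rw [show (1:ℝ)/r + 1 = (r+1)/r by field_simp; ring, inv_div, inv_neg,
      div_eq_iff (show r + 1 ≠ 0 from ne_of_lt hrp1), add_mul, one_mul, neg_mul,
      inv_mul_cancel₀ (show r + 1 ≠ 0 from ne_of_lt hrp1)]
    ring
  have hflr : (⌊r⌋ : ℝ) + f = r := Int.floor_add_fract r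
  have hfa : (⌊r⌋ : ℝ) < -1 := by linarith
  have hfa2 : ⌊r⌋ ≤ -2 := by
    have : ⌊r⌋ < -1 := by exact_mod_cast hfa
    omega
  obtain ⟨i, j, hi1, hj1, hij⟩ := lemL f hfi hf0 hf1
  rcases eq_or_lt_of_le hfa2 with ha | ha
  · -- ⌊r⌋ = -2 : -(r+1) = 1 - f
    have hre : r = -2 + f := by
      have h2 : (⌊r⌋:ℝ) = -2 := by rw [ha]; norm_num
      linarith
    have s1' : cfTerm (1/r) 1 = 1 + (1-f)⁻¹ := by
      rw [s1, show -(r+1) = 1 - f by rw [hre]; ring]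
    have s2 : cfTerm (1/r) 2 = cfTerm (1-f)⁻¹ 1 := by
      rw [show (2:ℕ) = 1+1 from rfl, cfTerm_succ, s1', cfTerm_succ, cfTerm_zero]
      rw [show (1:ℝ) + (1-f)⁻¹ = ((1:ℤ):ℝ) + (1-f)⁻¹ by norm_num, Int.fract_intCast_add]
    refine ⟨1 + i, 2 + (j - 1), ?_⟩
    rw [cfTerm_shift, cfTerm_shift, t1, s2, hij, ← cfTerm_shift]
    congr 1
    omega
  · -- ⌊r⌋ ≤ -3
    have ha3 : ⌊r⌋ ≤ -3 := by omega
    have ha3' : (⌊r⌋:ℝ) ≤ -3 := by exact_mod_cast ha3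
    have ht1 : 1 < -(r+1) := by linarith
    have hiv : (0:ℝ) < (-(r+1))⁻¹ := by positivity
    have hiv1 : (-(r+1))⁻¹ < 1 := by rw [inv_lt_one_iff₀]; right; exact ht1
    have s2 : cfTerm (1/r) 2 = -(r+1) := by
      rw [show (2:ℕ) = 1+1 from rfl, cfTerm_succ, s1]
      rw [show (1:ℝ) + (-(r+1))⁻¹ = ((1:ℤ):ℝ) + (-(r+1))⁻¹ by norm_num,
        Int.fract_intCast_add, Int.fract_eq_self.mpr ⟨hiv.le, hiv1⟩, inv_inv]
    have s3 : cfTerm (1/r) 3 = (1-f)⁻¹ := by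
      rw [show (3:ℕ) = 2+1 from rfl, cfTerm_succ, s2]
      have : -(r+1) = ((-⌊r⌋-2 : ℤ):ℝ) + (1 - f) := by push_cast; linarith
      rw [this, Int.fract_intCast_add, Int.fract_eq_self.mpr ⟨by linarith, by linarith⟩]
    refine ⟨1 + i, 3 + j, ?_⟩
    rw [cfTerm_shift, cfTerm_shift, t1, s3, hij]

/-- If `r` is irrational, then `r` and `1/r` have common tails. -/
theorem roots_common_tails_stmt_2 (r : ℝ) (hr : Irrational r) :
    CommonTails r (1 / r) := by
  have hrne : r ≠ 0 := hr.ne_zero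
  rcases lt_trichotomy r 0 with hneg | hz | hpos
  · rcases lt_trichotomy r (-1) with h | h | h
    · obtain ⟨m, n, hmn⟩ := negcase r hr h
      exact commonTails_of_eq hmn
    · exact absurd h (by intro he; exact (hr.ne_int (-1)) (by rw [he]; norm_num))
    · -- -1 < r < 0, apply negcase to 1/r
      have h1r : 1/r < -1 := by rw [div_lt_iff_of_neg hneg]; linarith
      have h1ri : Irrational (1/r) := by rw [one_div]; exact hr.inv
      obtain ⟨m, n, hmn⟩ := negcase (1/r) h1ri h1r
      rw [one_div_one_div] at hmn
      exact commonTails_of_eq hmn.symm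
  · exact absurd hz hrne
  · rcases lt_trichotomy r 1 with h | h | h
    · -- 0 < r < 1 : cfTerm r 1 = 1/r
      have : cfTerm r 1 = cfTerm (1/r) 0 := by
        rw [cfTerm_succ, cfTerm_zero, Int.fract_eq_self.mpr ⟨hpos.le, h⟩,
          cfTerm_zero, one_div]
      exact commonTails_of_eq this
    · exact absurd h (by intro he; exact (hr.ne_int 1) (by rw [he]; norm_num))
    · -- r > 1 : cfTerm (1/r) 1 = r
      have h0 : 0 < 1/r := by positivity
      have h1 : 1/r < 1 := by rw [div_lt_one (by linarith)]; exact h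
      have : cfTerm r 0 = cfTerm (1/r) 1 := by
        rw [cfTerm_succ, cfTerm_zero, cfTerm_zero, Int.fract_eq_self.mpr ⟨h0.le, h1⟩,
          one_div, inv_inv]
      exact commonTails_of_eq this
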